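/- Let $k$ be a field and $V$ a 2-dimensional $k$-vector space with basis $x_0,x_1$. For $n\ge 2$, define the map $Q: S^{n-2}V \to S^2(S^nV)$ by $Q(f) = (x_0^2 f)\cdot(x_1^2 f) - (x_0x_1 f)^2$ (products taken in the symmetric algebra of $S^nV$). Then the associated polarized linear map $S_2(S^{n-2}V)\to S^2(S^nV)$ is injective. -/

import Mathlib

/-! Writing `D = x₀² ⊗ x₁² - x₀x₁ ⊗ x₀x₁` in the algebra `S ⊗ S`, the polarization is
`t ↦ [D t]`. A class in `S²(S)` vanishes only if its symmetrization does, and for symmetric `t`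
the symmetrization of `D t` is `(D + D^σ) t`, where `σ` is the flip. Now `S ⊗ S` is the
polynomial ring in four variables, a domain, and `D + D^σ ≠ 0` (it takes the value `1` at
`x = (1, 0)`, `y = (0, 1)`), so `t = 0`. -/

open MvPolynomial TensorProduct

noncomputable section

variable (k : Type*) [Field k]

abbrev BinS := MvPolynomial (Fin 2) k

/-- degree-`d` binary forms `SᵈV`. -/
abbrev binForms (d : ℕ) : Submodule k (BinS k) :=
  MvPolynomial.homogeneousSubmodule (Fin 2) k d

/-- the symmetric square `S²(S)` of the space of binary forms, as the quotient of
`S ⊗ S` by the span of `a ⊗ b - b ⊗ a`. -/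
abbrev SymSq := (BinS k ⊗[k] BinS k) ⧸
  Submodule.span k {z : BinS k ⊗[k] BinS k | ∃ a b : BinS k, z = a ⊗ₜ b - b ⊗ₜ a}

/-- The polarization of the quadratic map `Q(f) = (x₀²f)(x₁²f) - (x₀x₁f)²`, as a linear
map `S ⊗ S → S²(S)`: `f ⊗ g ↦ class of (x₀²f) ⊗ (x₁²g) - (x₀x₁f) ⊗ (x₀x₁g)`. -/
def polQ : BinS k ⊗[k] BinS k →ₗ[k] SymSq k :=
  (Submodule.mkQ _).comp
    (TensorProduct.map (LinearMap.mulLeft k ((X 0 : BinS k) * X 0))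
        (LinearMap.mulLeft k ((X 1 : BinS k) * X 1)) -
      TensorProduct.map (LinearMap.mulLeft k ((X 0 : BinS k) * X 1))
        (LinearMap.mulLeft k ((X 0 : BinS k) * X 1)))

/-- the flip on `S ⊗ S`. -/
def flipMap : BinS k ⊗[k] BinS k →ₗ[k] BinS k ⊗[k] BinS k :=
  (TensorProduct.comm k _ _).toLinearMap

/-- symmetric tensors `S₂(S^{n-2}V) ⊆ S^{n-2}V ⊗ S^{n-2}V`. -/
def symTensors (m : ℕ) : Submodule k (BinS k ⊗[k] BinS k) :=
  (Submodule.map₂ (TensorProduct.mk k _ _) (binForms k m) (binForms k m)) ⊓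
    LinearMap.ker (flipMap k - LinearMap.id)

theorem MvPolynomial.isDomain_tensorProduct (R σ ι : Type*) [CommRing R] [IsDomain R] :
    IsDomain (MvPolynomial σ R ⊗[R] MvPolynomial ι R) :=
  (tensorEquivSum R σ ι R).toRingEquiv.isDomain_iff.mpr inferInstance

theorem TensorProduct.add_comm_eq_zero_of_mem_span_antisymm {R M : Type*} [CommRing R]
    [AddCommGroup M] [Module R M] {z : M ⊗[R] M}
    (hz : z ∈ Submodule.span R {z : M ⊗[R] M | ∃ a b : M, z = a ⊗ₜ b - b ⊗ₜ a}) :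
    z + TensorProduct.comm R M M z = 0 := by
  induction hz using Submodule.span_induction with
  | mem x hx =>
    obtain ⟨a, b, rfl⟩ := hx
    simp
  | zero => simp
  | add x y _ _ hx hy => rw [map_add, add_add_add_comm, hx, hy, add_zero]
  | smul r x _ hx => rw [map_smul, ← smul_add, hx, smul_zero]

theorem Algebra.TensorProduct.mul_add_comm_of_comm_eq {R A : Type*} [CommSemiring R]
    [Semiring A] [Algebra R A] (a : A ⊗[R] A) {t : A ⊗[R] A}
    (ht : Algebra.TensorProduct.comm R A A t = t) :
    a * t + Algebra.TensorProduct.comm R A A (a * t) =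
      (a + Algebra.TensorProduct.comm R A A a) * t := by
  rw [map_mul, ht, add_mul]

def polQTensor : BinS k ⊗[k] BinS k :=
  (X 0 * X 0) ⊗ₜ (X 1 * X 1) - (X 0 * X 1) ⊗ₜ (X 0 * X 1)

theorem polQ_apply (t : BinS k ⊗[k] BinS k) :
    polQ k t = Submodule.mkQ _ (polQTensor k * t) := by
  rw [polQ, LinearMap.comp_apply, LinearMap.sub_apply, ← LinearMap.mulLeft_tmul,
    ← LinearMap.mulLeft_tmul, polQTensor, sub_mul]
  rfl

theorem polQTensor_add_comm_ne_zero :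
    polQTensor k + Algebra.TensorProduct.comm k _ _ (polQTensor k) ≠ 0 := by
  intro h
  have := congrArg
    (Algebra.TensorProduct.productMap (aeval ![(1 : k), 0]) (aeval ![(0 : k), 1])) h
  simp [polQTensor, Algebra.TensorProduct.productMap_apply_tmul] at this

theorem polarized_Q_injective (n : ℕ) :
    ∀ t ∈ symTensors k (n - 2), polQ k t = 0 → t = 0 := by
  intro t ht hQ
  have : IsDomain (BinS k ⊗[k] BinS k) := isDomain_tensorProduct k (Fin 2) (Fin 2)
  have hsymm : Algebra.TensorProduct.comm k _ _ t = t := sub_eq_zero.mp ht.2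
  rw [polQ_apply, Submodule.mkQ_apply, Submodule.Quotient.mk_eq_zero] at hQ
  have hzero : (polQTensor k + Algebra.TensorProduct.comm k _ _ (polQTensor k)) * t = 0 := by
    rw [← Algebra.TensorProduct.mul_add_comm_of_comm_eq _ hsymm]
    exact add_comm_eq_zero_of_mem_span_antisymm hQ
  exact (mul_eq_zero.mp hzero).resolve_left (polQTensor_add_comm_ne_zero k)

end
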